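/- Let m, n, k be positive integers with k ≤ n and let X ∈ M_m ⊗ M_n. Then the supremum, over all N ∈ ℕ and all families A_1,…,A_N, B_1,…,B_N ∈ M_{k,n} of k×n complex matrices satisfying ‖∑_{i=1}^N A_i A_i^*‖ ≤ 1 and ‖∑_{i=1}^N B_i B_i^*‖ ≤ 1, of ‖∑_{i=1}^N (I_m ⊗ A_i) X (I_m ⊗ B_i^*)‖, equals the S(k)-norm ‖X‖_{S(k)}. (This is Theorem 3.1: the k-minimal operator space norm on M_m(M_n) equals the S(k)-norm.) -/

import Mathlib

open scoped ComplexOrder Kronecker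
open Matrix

noncomputable section

/-- The standard inner product `⟨v, w⟩ = ∑ conj(vᵢ) wᵢ` on `I → ℂ`. -/
def inprod {I : Type*} [Fintype I] (v w : I → ℂ) : ℂ :=
  ∑ i, (starRingEnd ℂ) (v i) * w i

/-- `v` is a unit vector. -/
def UnitVec {I : Type*} [Fintype I] (v : I → ℂ) : Prop :=
  inprod v v = 1

/-- The Schmidt rank of a vector in `ℂ^I ⊗ ℂ^J`, i.e. the rank of the associated
`I × J` coefficient matrix. -/
noncomputable def SchmidtRank {I J : Type*} [Fintype I] [Fintype J] (v : I × J → ℂ) : ℕ :=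
  (Matrix.of fun i j => v (i, j)).rank

/-- The operator norm (largest singular value) of a matrix, as
`sup { |⟨v, A w⟩| : v, w unit vectors }`. -/
noncomputable def opNorm {I J : Type*} [Fintype I] [Fintype J] (A : Matrix I J ℂ) : ℝ :=
  sSup { t : ℝ | ∃ v w, UnitVec v ∧ UnitVec w ∧ t = ‖inprod v (A.mulVec w)‖ }

/-- The `S(k)`-norm of `X ∈ M_I ⊗ M_J`. -/
noncomputable def SNorm {I J : Type*} [Fintype I] [Fintype J] (k : ℕ)
    (X : Matrix (I × J) (I × J) ℂ) : ℝ :=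
  sSup { t : ℝ | ∃ v w : I × J → ℂ, UnitVec v ∧ UnitVec w ∧
    SchmidtRank v ≤ k ∧ SchmidtRank w ≤ k ∧
    t = ‖inprod v (X.mulVec w)‖ }

/-- `X` is a `k`-block positive (Hermitian) operator: `⟨v, X v⟩ ≥ 0` for every
vector of Schmidt rank at most `k`. -/
def kBlockPos {I J : Type*} [Fintype I] [Fintype J] (k : ℕ)
    (X : Matrix (I × J) (I × J) ℂ) : Prop :=
  X.IsHermitian ∧ ∀ v : I × J → ℂ, SchmidtRank v ≤ k → 0 ≤ inprod v (X.mulVec v)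

/-- `ρ` has Schmidt number at most `k` (in particular it is positive semidefinite):
it is a finite nonnegative combination of rank-one projections onto vectors of
Schmidt rank at most `k`. -/
def SchmidtNumberLE {I J : Type*} [Fintype I] [Fintype J] (k : ℕ)
    (ρ : Matrix (I × J) (I × J) ℂ) : Prop :=
  ∃ (N : ℕ) (c : Fin N → ℝ) (v : Fin N → (I × J → ℂ)),
    (∀ i, 0 ≤ c i) ∧ (∀ i, SchmidtRank (v i) ≤ k) ∧
    ρ = ∑ i, (c i : ℂ) • Matrix.vecMulVec (v i) (star (v i))

/-- `id_I ⊗ Φ` : the map applying `Φ` to the second tensor factor. -/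
noncomputable def tensorId {I : Type*} [Fintype I] {a b : ℕ}
    (Φ : Matrix (Fin a) (Fin a) ℂ →ₗ[ℂ] Matrix (Fin b) (Fin b) ℂ)
    (X : Matrix (I × Fin a) (I × Fin a) ℂ) : Matrix (I × Fin b) (I × Fin b) ℂ :=
  Matrix.of fun p q => Φ (Matrix.of fun s t => X (p.1, s) (q.1, t)) p.2 q.2

/-- The trace norm `‖X‖_tr = Tr √(X^* X)`. -/
noncomputable def trNorm {I : Type*} [Fintype I] [DecidableEq I] (X : Matrix I I ℂ) : ℝ :=
  (((Matrix.posSemidef_conjTranspose_mul_self X).1.eigenvectorUnitary : Matrix I I ℂ) *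
    diagonal (((↑) : ℝ → ℂ) ∘ (√·) ∘ (Matrix.posSemidef_conjTranspose_mul_self X).1.eigenvalues) *
    (star (Matrix.posSemidef_conjTranspose_mul_self X).1.eigenvectorUnitary : Matrix I I ℂ)).trace.re

end

/-!
For `sup ≤ ‖X‖_{S(k)}`: with `xᵢ = (1 ⊗ Aᵢ^*) v` and `yᵢ = (1 ⊗ Bᵢ^*) w`, the form
`⟨v, ∑ (1 ⊗ Aᵢ) X (1 ⊗ Bᵢ)^* w⟩` equals `∑ ⟨xᵢ, X yᵢ⟩`. Each `xᵢ` has Schmidt rank at most `k`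
because `Aᵢ^*` has `k` columns, and `∑ ‖xᵢ‖² = ⟨v, (1 ⊗ ∑ AᵢAᵢ^*) v⟩ ≤ 1`, so Cauchy–Schwarz
bounds the sum by `‖X‖_{S(k)}`.

For `sup ≥ ‖X‖_{S(k)}`: the rows of a vector `v` of Schmidt rank at most `k` span a space of
dimension at most `k`. An orthonormal basis of it, padded by zero rows, is a `k × n` matrix `A`
with `‖AA^*‖ ≤ 1` and `(1 ⊗ A^*A) v = v`. Hence
`⟨v, X w⟩ = ⟨(1 ⊗ A) v, (1 ⊗ A) X (1 ⊗ B)^* (1 ⊗ B) w⟩` with unit vectors `(1 ⊗ A) v`,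
`(1 ⊗ B) w`: a single term (`N = 1`) already attains the value.
-/

section KroneckerAlgebra

variable {I J K : Type*} [DecidableEq I]

theorem conjTranspose_one_kronecker (A : Matrix K J ℂ) :
    ((1 : Matrix I I ℂ) ⊗ₖ A)ᴴ = 1 ⊗ₖ Aᴴ := by
  rw [conjTranspose_kronecker, conjTranspose_one]

theorem one_kronecker_sum {ι : Type*} (s : Finset ι) (C : ι → Matrix K J ℂ) :
    ∑ i ∈ s, (1 : Matrix I I ℂ) ⊗ₖ C i = 1 ⊗ₖ ∑ i ∈ s, C i := by
  ext
  simp [Matrix.sum_apply, Finset.mul_sum]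

end KroneckerAlgebra

section

variable {I J K : Type*}

abbrev toEuc (v : I → ℂ) : EuclideanSpace ℂ I := WithLp.toLp 2 v

theorem toEuc_smul (c : ℂ) (v : I → ℂ) : toEuc (c • v) = c • toEuc v := rfl

variable [Fintype I] [Fintype J]

theorem inprod_eq_star_dotProduct (v w : I → ℂ) : inprod v w = star v ⬝ᵥ w := rfl

theorem inprod_eq_inner (v w : I → ℂ) : inprod v w = inner ℂ (toEuc v) (toEuc w) := by
  simp [inprod, EuclideanSpace.inner_eq_star_dotProduct, dotProduct, mul_comm]

theorem inprod_self (v : I → ℂ) : inprod v v = (‖toEuc v‖ : ℂ) ^ 2 := by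
  rw [inprod_eq_inner, inner_self_eq_norm_sq_to_K]
  rfl

theorem unitVec_iff (v : I → ℂ) : UnitVec v ↔ ‖toEuc v‖ = 1 := by
  rw [UnitVec, inprod_self, ← Complex.ofReal_pow, Complex.ofReal_eq_one]
  exact pow_eq_one_iff_of_nonneg (norm_nonneg _) two_ne_zero

theorem norm_inprod_le (v w : I → ℂ) : ‖inprod v w‖ ≤ ‖toEuc v‖ * ‖toEuc w‖ := by
  rw [inprod_eq_inner]
  exact norm_inner_le_norm _ _

theorem inprod_sum_right {ι : Type*} (s : Finset ι) (v : I → ℂ) (w : ι → I → ℂ) :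
    inprod v (∑ i ∈ s, w i) = ∑ i ∈ s, inprod v (w i) := by
  simp only [inprod_eq_inner, WithLp.toLp_sum, inner_sum]

theorem inprod_conjTranspose_mulVec (M : Matrix I J ℂ) (u : I → ℂ) (w : J → ℂ) :
    inprod (Mᴴ *ᵥ u) w = inprod u (M *ᵥ w) := by
  rw [inprod_eq_star_dotProduct, inprod_eq_star_dotProduct, star_mulVec,
    conjTranspose_conjTranspose, dotProduct_mulVec]

theorem inprod_eq_sum_curry (v w : I × J → ℂ) :
    inprod v w = ∑ a, inprod (Function.curry v a) (Function.curry w a) :=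
  Fintype.sum_prod_type _

theorem norm_sq_eq_sum_curry (v : I × J → ℂ) :
    ‖toEuc v‖ ^ 2 = ∑ a, ‖toEuc (Function.curry v a)‖ ^ 2 := by
  have h := inprod_eq_sum_curry v v
  simp only [inprod_self] at h
  exact_mod_cast h

theorem unitVec_normalize {v : I → ℂ} (hv : v ≠ 0) :
    UnitVec (((‖toEuc v‖⁻¹ : ℝ) : ℂ) • v) := by
  rw [unitVec_iff, toEuc_smul, norm_smul, Complex.norm_real, norm_inv, norm_norm,
    inv_mul_cancel₀ (by simpa using hv)]

theorem norm_inprod_mulVec_le_of_unitVec {A : Matrix I J ℂ} {P : (I → ℂ) → Prop}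
    {Q : (J → ℂ) → Prop} (hP : ∀ (c : ℂ) v, P v → P (c • v))
    (hQ : ∀ (c : ℂ) w, Q w → Q (c • w)) {C : ℝ}
    (h : ∀ v w, UnitVec v → UnitVec w → P v → Q w → ‖inprod v (A *ᵥ w)‖ ≤ C)
    {v : I → ℂ} {w : J → ℂ} (hv : P v) (hw : Q w) :
    ‖inprod v (A *ᵥ w)‖ ≤ C * (‖toEuc v‖ * ‖toEuc w‖) := by
  rcases eq_or_ne v 0 with rfl | hv0
  · simp [inprod]
  rcases eq_or_ne w 0 with rfl | hw0
  · simp [inprod]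
  have hnv : 0 < ‖toEuc v‖ := by simpa using hv0
  have hnw : 0 < ‖toEuc w‖ := by simpa using hw0
  have key := h _ _ (unitVec_normalize hv0) (unitVec_normalize hw0) (hP _ _ hv) (hQ _ _ hw)
  rw [mulVec_smul, inprod_eq_inner, toEuc_smul, toEuc_smul, inner_smul_left, inner_smul_right,
    ← inprod_eq_inner, norm_mul, norm_mul, RCLike.norm_conj, Complex.norm_real,
    Complex.norm_real, norm_inv, norm_inv, norm_norm, norm_norm, inv_mul_le_iff₀ hnv,
    inv_mul_le_iff₀ hnw] at key
  linarith

theorem opNorm_bddAbove (A : Matrix I J ℂ) :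
    BddAbove { t : ℝ | ∃ v w, UnitVec v ∧ UnitVec w ∧ t = ‖inprod v (A *ᵥ w)‖ } := by
  classical
  let L := LinearMap.toContinuousLinearMap (toLpLin 2 2 A)
  refine ⟨‖L‖, ?_⟩
  rintro t ⟨v, w, hv, hw, rfl⟩
  rw [unitVec_iff] at hv hw
  calc ‖inprod v (A *ᵥ w)‖ ≤ ‖toEuc v‖ * ‖toEuc (A *ᵥ w)‖ := norm_inprod_le _ _
    _ = ‖L (toEuc w)‖ := by rw [hv, one_mul]; rfl
    _ ≤ ‖L‖ := by simpa [hw] using L.le_opNorm (toEuc w)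

theorem opNorm_nonneg (A : Matrix I J ℂ) : 0 ≤ opNorm A :=
  Real.sSup_nonneg fun _ ⟨_, _, _, _, ht⟩ => ht ▸ norm_nonneg _

theorem opNorm_le {A : Matrix I J ℂ} {C : ℝ} (hC : 0 ≤ C)
    (h : ∀ v w, UnitVec v → UnitVec w → ‖inprod v (A *ᵥ w)‖ ≤ C) : opNorm A ≤ C :=
  Real.sSup_le (fun _ ⟨v, w, hv, hw, ht⟩ => ht ▸ h v w hv hw) hC

theorem norm_inprod_mulVec_le_opNorm (A : Matrix I J ℂ) (v : I → ℂ) (w : J → ℂ) :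
    ‖inprod v (A *ᵥ w)‖ ≤ opNorm A * (‖toEuc v‖ * ‖toEuc w‖) :=
  norm_inprod_mulVec_le_of_unitVec (P := fun _ => True) (Q := fun _ => True)
    (fun _ _ _ => trivial) (fun _ _ _ => trivial)
    (fun v w hv hw _ _ => le_csSup (opNorm_bddAbove A) ⟨v, w, hv, hw, rfl⟩) trivial trivial

theorem schmidtRank_smul_le (c : ℂ) (v : I × J → ℂ) :
    SchmidtRank (c • v) ≤ SchmidtRank v := by
  classical
  have h : (of fun i j => (c • v) (i, j)) = (of fun i j => v (i, j)) * (c • 1 : Matrix J J ℂ) := by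
    rw [Matrix.mul_smul, Matrix.mul_one]
    rfl
  exact (congrArg rank h).trans_le (rank_mul_le_left _ _)

theorem SNorm_nonneg (k : ℕ) (X : Matrix (I × J) (I × J) ℂ) : 0 ≤ SNorm k X :=
  Real.sSup_nonneg fun _ ⟨_, _, _, _, _, _, ht⟩ => ht ▸ norm_nonneg _

theorem norm_inprod_mulVec_le_SNorm {k : ℕ} (X : Matrix (I × J) (I × J) ℂ) {v w : I × J → ℂ}
    (hv : SchmidtRank v ≤ k) (hw : SchmidtRank w ≤ k) :
    ‖inprod v (X *ᵥ w)‖ ≤ SNorm k X * (‖toEuc v‖ * ‖toEuc w‖) := by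
  have hbdd : BddAbove { t : ℝ | ∃ v w : I × J → ℂ, UnitVec v ∧ UnitVec w ∧
      SchmidtRank v ≤ k ∧ SchmidtRank w ≤ k ∧ t = ‖inprod v (X *ᵥ w)‖ } :=
    (opNorm_bddAbove X).mono <| by
      rintro _ ⟨v, w, hv, hw, -, -, ht⟩
      exact ⟨v, w, hv, hw, ht⟩
  have hclosed : ∀ (c : ℂ) (v : I × J → ℂ), SchmidtRank v ≤ k → SchmidtRank (c • v) ≤ k :=
    fun c v hv => (schmidtRank_smul_le c v).trans hv
  exact norm_inprod_mulVec_le_of_unitVec hclosed hclosed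
    (fun v w hv hw hrv hrw => le_csSup hbdd ⟨v, w, hv, hw, hrv, hrw, rfl⟩) hv hw

theorem sum_mul_le_one_of_sum_sq_le_one {ι : Type*} (s : Finset ι) {f g : ι → ℝ}
    (hf : ∑ i ∈ s, f i ^ 2 ≤ 1) (hg : ∑ i ∈ s, g i ^ 2 ≤ 1) : ∑ i ∈ s, f i * g i ≤ 1 :=
  (Real.sum_mul_le_sqrt_mul_sqrt s f g).trans
    (mul_le_one₀ (Real.sqrt_le_one.2 hf) (Real.sqrt_nonneg _) (Real.sqrt_le_one.2 hg))

theorem sum_norm_sq_conjTranspose_mulVec_le {ι : Type*} [Fintype ι] (T : ι → Matrix I J ℂ)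
    (v : I → ℂ) :
    ∑ i, ‖toEuc ((T i)ᴴ *ᵥ v)‖ ^ 2 ≤ opNorm (∑ i, T i * (T i)ᴴ) * ‖toEuc v‖ ^ 2 := by
  have h : ((∑ i, ‖toEuc ((T i)ᴴ *ᵥ v)‖ ^ 2 : ℝ) : ℂ)
      = inprod v ((∑ i, T i * (T i)ᴴ) *ᵥ v) := by
    rw [sum_mulVec, inprod_sum_right]
    push_cast
    refine Finset.sum_congr rfl fun i _ => ?_
    rw [← inprod_self, inprod_conjTranspose_mulVec, mulVec_mulVec]
  calc ∑ i, ‖toEuc ((T i)ᴴ *ᵥ v)‖ ^ 2 = ‖inprod v ((∑ i, T i * (T i)ᴴ) *ᵥ v)‖ := by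
        rw [← h, Complex.norm_of_nonneg (by positivity)]
    _ ≤ opNorm (∑ i, T i * (T i)ᴴ) * ‖toEuc v‖ ^ 2 := by
        simpa [sq] using norm_inprod_mulVec_le_opNorm _ v v

theorem opNorm_mul_conjTranspose_le_one [Fintype K] {A : Matrix K J ℂ}
    (hA : ∀ u, ‖toEuc (Aᴴ *ᵥ u)‖ ≤ ‖toEuc u‖) : opNorm (A * Aᴴ) ≤ 1 := by
  refine opNorm_le zero_le_one fun u w hu hw => ?_
  rw [unitVec_iff] at hu hw
  calc ‖inprod u ((A * Aᴴ) *ᵥ w)‖ = ‖inprod (Aᴴ *ᵥ u) (Aᴴ *ᵥ w)‖ := by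
        rw [inprod_conjTranspose_mulVec, mulVec_mulVec]
    _ ≤ ‖toEuc (Aᴴ *ᵥ u)‖ * ‖toEuc (Aᴴ *ᵥ w)‖ := norm_inprod_le _ _
    _ ≤ 1 := mul_le_one₀ ((hA u).trans hu.le) (norm_nonneg _) ((hA w).trans hw.le)

theorem norm_mulVec_eq_of_conjTranspose_mulVec_mulVec {T : Matrix I J ℂ} {v : J → ℂ}
    (h : Tᴴ *ᵥ (T *ᵥ v) = v) : ‖toEuc (T *ᵥ v)‖ = ‖toEuc v‖ := by
  have h2 : inprod (T *ᵥ v) (T *ᵥ v) = inprod v v := by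
    rw [← inprod_conjTranspose_mulVec, h]
  rw [inprod_self, inprod_self] at h2
  exact (sq_eq_sq₀ (norm_nonneg _) (norm_nonneg _)).1 (by exact_mod_cast h2)

theorem finrank_span_curry_eq_schmidtRank (v : I × J → ℂ) :
    Module.finrank ℂ (Submodule.span ℂ (Set.range fun a => toEuc (Function.curry v a)))
      = SchmidtRank v := by
  rw [SchmidtRank, rank_eq_finrank_span_row,
    ← LinearEquiv.finrank_map_eq (WithLp.linearEquiv 2 ℂ (J → ℂ)).symm, Submodule.map_span,
    ← Set.range_comp]
  rfl

theorem exists_coisometry_of_finrank_le (W : Submodule ℂ (EuclideanSpace ℂ J)) {k : ℕ}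
    (hW : Module.finrank ℂ W ≤ k) :
    ∃ A : Matrix (Fin k) J ℂ, (∀ u, ‖toEuc (Aᴴ *ᵥ u)‖ ≤ ‖toEuc u‖) ∧
      ∀ x, toEuc x ∈ W → Aᴴ *ᵥ (A *ᵥ x) = x := by
  obtain ⟨r, rfl⟩ := Nat.exists_eq_add_of_le hW
  let b := stdOrthonormalBasis ℂ W
  let q : Fin (Module.finrank ℂ W + r) → J → ℂ :=
    Fin.append (fun i => (b i : EuclideanSpace ℂ J).ofLp) 0
  let A : Matrix _ J ℂ := of fun s j => star (q s j)
  have hAH : ∀ u, toEuc (Aᴴ *ᵥ u) = ∑ i, u (Fin.castAdd r i) • (b i : EuclideanSpace ℂ J) := by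
    intro u
    ext j
    simp [A, q, mulVec, dotProduct, Fin.sum_univ_add, mul_comm]
  refine ⟨A, fun u => ?_, fun x hx => ?_⟩
  · have hrepr : ∑ i, u (Fin.castAdd r i) • (b i : EuclideanSpace ℂ J)
        = b.repr.symm (toEuc fun i => u (Fin.castAdd r i)) := by
      rw [← b.sum_repr_symm]
      simp
    rw [hAH, hrepr, Submodule.norm_coe, LinearIsometryEquiv.norm_map,
      ← sq_le_sq₀ (norm_nonneg _) (norm_nonneg _), EuclideanSpace.norm_sq_eq,
      EuclideanSpace.norm_sq_eq, Fin.sum_univ_add]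
    exact le_add_of_nonneg_right (by positivity)
  · have hcoef : ∀ i, (A *ᵥ x) (Fin.castAdd r i) = inner ℂ (b i) (⟨toEuc x, hx⟩ : W) := by
      intro i
      change inprod (q (Fin.castAdd r i)) x = _
      simp [q, inprod_eq_inner, Submodule.coe_inner]
    apply WithLp.toLp_injective 2
    change toEuc _ = toEuc x
    simp_rw [hAH, hcoef]
    simpa using congrArg ((↑) : W → EuclideanSpace ℂ J) (b.sum_repr' ⟨toEuc x, hx⟩)

section Kronecker

variable [DecidableEq I]

theorem curry_one_kronecker_mulVec (A : Matrix K J ℂ) (v : I × J → ℂ) (a : I) :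
    Function.curry (((1 : Matrix I I ℂ) ⊗ₖ A) *ᵥ v) a = A *ᵥ Function.curry v a := by
  ext i
  simp [mulVec, dotProduct, Fintype.sum_prod_type, one_apply, ite_mul]

theorem schmidtRank_one_kronecker_mulVec_le [Fintype K] (N : Matrix J K ℂ) (v : I × K → ℂ) :
    SchmidtRank (((1 : Matrix I I ℂ) ⊗ₖ N) *ᵥ v) ≤ Fintype.card K := by
  have h : (of fun a j => (((1 : Matrix I I ℂ) ⊗ₖ N) *ᵥ v) (a, j))
      = of (Function.curry v) * Nᵀ := by
    ext a j
    simpa [mulVec, dotProduct, mul_apply, mul_comm] using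
      congrFun (curry_one_kronecker_mulVec N v a) j
  exact (congrArg rank h).trans_le ((rank_mul_le_left _ _).trans (rank_le_card_width _))

theorem opNorm_one_kronecker_le [Fintype K] (C : Matrix K J ℂ) :
    opNorm ((1 : Matrix I I ℂ) ⊗ₖ C) ≤ opNorm C := by
  refine opNorm_le (opNorm_nonneg C) fun v w hv hw => ?_
  have hv' : ∑ a, ‖toEuc (Function.curry v a)‖ ^ 2 ≤ 1 := by
    rw [← norm_sq_eq_sum_curry, (unitVec_iff v).1 hv, one_pow]
  have hw' : ∑ a, ‖toEuc (Function.curry w a)‖ ^ 2 ≤ 1 := by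
    rw [← norm_sq_eq_sum_curry, (unitVec_iff w).1 hw, one_pow]
  calc ‖inprod v (((1 : Matrix I I ℂ) ⊗ₖ C) *ᵥ w)‖
      = ‖∑ a, inprod (Function.curry v a) (C *ᵥ Function.curry w a)‖ := by
        simp only [inprod_eq_sum_curry, curry_one_kronecker_mulVec]
    _ ≤ ∑ a, opNorm C * (‖toEuc (Function.curry v a)‖ * ‖toEuc (Function.curry w a)‖) :=
        (norm_sum_le _ _).trans (Finset.sum_le_sum fun a _ => norm_inprod_mulVec_le_opNorm _ _ _)
    _ ≤ opNorm C * 1 := by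
        rw [← Finset.mul_sum]
        exact mul_le_mul_of_nonneg_left (sum_mul_le_one_of_sum_sq_le_one _ hv' hw')
          (opNorm_nonneg C)
    _ = opNorm C := mul_one _

theorem sum_norm_sq_one_kronecker_le [Fintype K] {ι : Type*} [Fintype ι]
    (A : ι → Matrix K J ℂ) (hA : opNorm (∑ i, A i * (A i)ᴴ) ≤ 1) {v : I × K → ℂ}
    (hv : UnitVec v) :
    ∑ i, ‖toEuc (((1 : Matrix I I ℂ) ⊗ₖ A i)ᴴ *ᵥ v)‖ ^ 2 ≤ 1 := by
  have h : ∑ i, ((1 : Matrix I I ℂ) ⊗ₖ A i) * ((1 : Matrix I I ℂ) ⊗ₖ A i)ᴴ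
      = 1 ⊗ₖ ∑ i, A i * (A i)ᴴ := by
    simp only [conjTranspose_one_kronecker, ← mul_kronecker_mul, Matrix.one_mul,
      one_kronecker_sum]
  refine (sum_norm_sq_conjTranspose_mulVec_le _ v).trans ?_
  rw [(unitVec_iff v).1 hv, one_pow, mul_one, h]
  exact (opNorm_one_kronecker_le _).trans hA

theorem opNorm_sum_kronecker_le_SNorm [Fintype K] {ι : Type*} [Fintype ι]
    (X : Matrix (I × J) (I × J) ℂ) (A B : ι → Matrix K J ℂ)
    (hA : opNorm (∑ i, A i * (A i)ᴴ) ≤ 1) (hB : opNorm (∑ i, B i * (B i)ᴴ) ≤ 1) :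
    opNorm (∑ i, ((1 : Matrix I I ℂ) ⊗ₖ A i) * X * ((1 : Matrix I I ℂ) ⊗ₖ B i)ᴴ)
      ≤ SNorm (Fintype.card K) X := by
  refine opNorm_le (SNorm_nonneg _ X) fun v w hv hw => ?_
  set x := fun i => ((1 : Matrix I I ℂ) ⊗ₖ A i)ᴴ *ᵥ v
  set y := fun i => ((1 : Matrix I I ℂ) ⊗ₖ B i)ᴴ *ᵥ w
  have hrank : ∀ (C : Matrix K J ℂ) (u : I × K → ℂ),
      SchmidtRank (((1 : Matrix I I ℂ) ⊗ₖ C)ᴴ *ᵥ u) ≤ Fintype.card K := fun C u => by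
    rw [conjTranspose_one_kronecker]
    exact schmidtRank_one_kronecker_mulVec_le Cᴴ u
  calc ‖inprod v ((∑ i, ((1 : Matrix I I ℂ) ⊗ₖ A i) * X * ((1 : Matrix I I ℂ) ⊗ₖ B i)ᴴ) *ᵥ w)‖
      = ‖∑ i, inprod (x i) (X *ᵥ y i)‖ := by
        rw [sum_mulVec, inprod_sum_right]
        refine congrArg _ (Finset.sum_congr rfl fun i _ => ?_)
        rw [← mulVec_mulVec, ← mulVec_mulVec, ← inprod_conjTranspose_mulVec]
    _ ≤ ∑ i, SNorm (Fintype.card K) X * (‖toEuc (x i)‖ * ‖toEuc (y i)‖) :=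
        (norm_sum_le _ _).trans (Finset.sum_le_sum fun i _ =>
          norm_inprod_mulVec_le_SNorm X (hrank _ v) (hrank _ w))
    _ ≤ SNorm (Fintype.card K) X * 1 := by
        rw [← Finset.mul_sum]
        exact mul_le_mul_of_nonneg_left (sum_mul_le_one_of_sum_sq_le_one _
          (sum_norm_sq_one_kronecker_le A hA hv) (sum_norm_sq_one_kronecker_le B hB hw))
          (SNorm_nonneg _ X)
    _ = SNorm (Fintype.card K) X := mul_one _

theorem exists_factor_of_schmidtRank_le {k : ℕ} {v : I × J → ℂ} (hv : SchmidtRank v ≤ k) :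
    ∃ A : Matrix (Fin k) J ℂ, opNorm (A * Aᴴ) ≤ 1 ∧
      ((1 : Matrix I I ℂ) ⊗ₖ A)ᴴ *ᵥ (((1 : Matrix I I ℂ) ⊗ₖ A) *ᵥ v) = v := by
  obtain ⟨A, hcontr, hfix⟩ :=
    exists_coisometry_of_finrank_le _ ((finrank_span_curry_eq_schmidtRank v).trans_le hv)
  refine ⟨A, opNorm_mul_conjTranspose_le_one hcontr, ?_⟩
  ext ⟨a, j⟩
  rw [conjTranspose_one_kronecker]
  change Function.curry (((1 : Matrix I I ℂ) ⊗ₖ Aᴴ) *ᵥ ((1 ⊗ₖ A) *ᵥ v)) a j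
    = Function.curry v a j
  rw [curry_one_kronecker_mulVec, curry_one_kronecker_mulVec,
    hfix _ (Submodule.subset_span ⟨a, rfl⟩)]

theorem exists_norm_inprod_mulVec_le_opNorm_kronecker (X : Matrix (I × J) (I × J) ℂ) {k : ℕ}
    {v w : I × J → ℂ} (hv : SchmidtRank v ≤ k) (hw : SchmidtRank w ≤ k) :
    ∃ A B : Matrix (Fin k) J ℂ, opNorm (A * Aᴴ) ≤ 1 ∧ opNorm (B * Bᴴ) ≤ 1 ∧
      ‖inprod v (X *ᵥ w)‖ ≤
        opNorm (((1 : Matrix I I ℂ) ⊗ₖ A) * X * ((1 : Matrix I I ℂ) ⊗ₖ B)ᴴ)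
          * (‖toEuc v‖ * ‖toEuc w‖) := by
  obtain ⟨A, hA, hAv⟩ := exists_factor_of_schmidtRank_le (I := I) hv
  obtain ⟨B, hB, hBw⟩ := exists_factor_of_schmidtRank_le (I := I) hw
  refine ⟨A, B, hA, hB, ?_⟩
  have h : inprod (((1 : Matrix I I ℂ) ⊗ₖ A) *ᵥ v)
      ((((1 : Matrix I I ℂ) ⊗ₖ A) * X * ((1 : Matrix I I ℂ) ⊗ₖ B)ᴴ) *ᵥ
        (((1 : Matrix I I ℂ) ⊗ₖ B) *ᵥ w)) = inprod v (X *ᵥ w) := by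
    rw [← mulVec_mulVec, ← mulVec_mulVec, ← inprod_conjTranspose_mulVec, hAv, hBw]
  rw [← h, ← norm_mulVec_eq_of_conjTranspose_mulVec_mulVec hAv,
    ← norm_mulVec_eq_of_conjTranspose_mulVec_mulVec hBw]
  exact norm_inprod_mulVec_le_opNorm _ _ _

/-- The set whose supremum is the `k`-minimal operator space norm of `X`. -/
def kMinimalNormSet (k : ℕ) (X : Matrix (I × J) (I × J) ℂ) : Set ℝ :=
  { t | ∃ (N : ℕ) (A B : Fin N → Matrix (Fin k) J ℂ),
    opNorm (∑ i, A i * (A i)ᴴ) ≤ 1 ∧ opNorm (∑ i, B i * (B i)ᴴ) ≤ 1 ∧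
    t = opNorm (∑ i, ((1 : Matrix I I ℂ) ⊗ₖ A i) * X * ((1 : Matrix I I ℂ) ⊗ₖ B i)ᴴ) }

variable {k : ℕ} {X : Matrix (I × J) (I × J) ℂ}

theorem le_SNorm_of_mem_kMinimalNormSet {t : ℝ} (ht : t ∈ kMinimalNormSet k X) :
    t ≤ SNorm k X := by
  obtain ⟨N, A, B, hA, hB, rfl⟩ := ht
  simpa using opNorm_sum_kronecker_le_SNorm X A B hA hB

theorem SNorm_le_sSup_kMinimalNormSet : SNorm k X ≤ sSup (kMinimalNormSet k X) := by
  refine Real.sSup_le (fun s ⟨v, w, hv, hw, hrv, hrw, hs⟩ => ?_)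
    (Real.sSup_nonneg fun t ⟨_, _, _, _, _, ht⟩ => ht ▸ opNorm_nonneg _)
  obtain ⟨A, B, hA, hB, h⟩ := exists_norm_inprod_mulVec_le_opNorm_kronecker X hrv hrw
  rw [(unitVec_iff v).1 hv, (unitVec_iff w).1 hw, mul_one, mul_one, ← hs] at h
  exact h.trans (le_csSup ⟨SNorm k X, fun _ => le_SNorm_of_mem_kMinimalNormSet⟩
    ⟨1, fun _ => A, fun _ => B, by simpa using hA, by simpa using hB, by simp⟩)

end Kronecker

end

theorem kMinimal_norm_eq_SNorm_general (m n k : ℕ) (X : Matrix (Fin m × Fin n) (Fin m × Fin n) ℂ) :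
    sSup { t : ℝ | ∃ (N : ℕ) (A B : Fin N → Matrix (Fin k) (Fin n) ℂ),
        opNorm (∑ i, A i * (A i)ᴴ) ≤ 1 ∧ opNorm (∑ i, B i * (B i)ᴴ) ≤ 1 ∧
        t = opNorm (∑ i, ((1 : Matrix (Fin m) (Fin m) ℂ) ⊗ₖ A i) * X *
          (((1 : Matrix (Fin m) (Fin m) ℂ) ⊗ₖ B i)ᴴ)) }
      = SNorm k X :=
  le_antisymm (Real.sSup_le (fun _ => le_SNorm_of_mem_kMinimalNormSet) (SNorm_nonneg k X))
    SNorm_le_sSup_kMinimalNormSet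

/-- Theorem 3.1: the `k`-minimal operator space norm on `M_m(M_n)` equals the `S(k)`-norm. -/
theorem kMinimal_norm_eq_SNorm (m n k : ℕ) (hm : 0 < m) (hn : 0 < n) (hk : 0 < k) (hkn : k ≤ n)
    (X : Matrix (Fin m × Fin n) (Fin m × Fin n) ℂ) :
    sSup { t : ℝ | ∃ (N : ℕ) (A B : Fin N → Matrix (Fin k) (Fin n) ℂ),
        opNorm (∑ i, A i * (A i)ᴴ) ≤ 1 ∧ opNorm (∑ i, B i * (B i)ᴴ) ≤ 1 ∧
        t = opNorm (∑ i, ((1 : Matrix (Fin m) (Fin m) ℂ) ⊗ₖ A i) * X *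
          (((1 : Matrix (Fin m) (Fin m) ℂ) ⊗ₖ B i)ᴴ)) }
      = SNorm k X :=
  kMinimal_norm_eq_SNorm_general m n k X
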